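/- The Lobachevsky function Л(θ) = -∫_0^θ log|2 sin t| dt satisfies the distribution identity Л(nθ) = n Σ_{j=0}^{n-1} Л(θ + jπ/n) for every positive integer n and all real θ. -/

import Mathlib

/-!
Factoring `1 - w ^ n` over the `n`-th roots of unity gives the multiplication formula
`∏_{k<n} 2 sin (t + kπ/n) = 2 sin (n t)`; taking `log |·|` turns it into an identity of integrands
valid off the countable zero set of `sin (n t)`. Integrating over `[0, θ]` and substituting
`t ↦ n t` gives `Л(nθ) = n ∑_j (Л(θ + jπ/n) - Л(jπ/n))`. Since `∫₀^π log |2 sin t| dt = 0`, `Л` is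
odd and `π`-periodic, so the values `Л(kπ/n)` cancel in pairs `k ↔ n - k`.
-/

open Real BigOperators

/-- The Lobachevsky function Л(θ) = -∫₀^θ log|2 sin t| dt. -/
noncomputable def lob (θ : ℝ) : ℝ := -∫ t in (0 : ℝ)..θ, Real.log |2 * Real.sin t|

open Finset MeasureTheory

lemma IsPrimitiveRoot.prod_one_sub_pow_mul {R : Type*} [CommRing R] [IsDomain R] {ζ : R} {n : ℕ}
    (hζ : IsPrimitiveRoot ζ n) (hn : 0 < n) (w : R) :
    ∏ k ∈ range n, (1 - ζ ^ k * w) = 1 - w ^ n := by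
  have h := congrArg (Polynomial.eval 1) (X_pow_sub_C_eq_prod hζ hn (rfl : w ^ n = w ^ n))
  simpa [Polynomial.eval_prod] using h.symm

namespace Complex

lemma two_mul_sin_eq_exp_mul (w : ℂ) :
    2 * sin w = exp ((w - π / 2) * I) * (1 - exp (-2 * w * I)) := by
  have h : exp ((w - π / 2) * I) = -I * exp (w * I) := by
    rw [sub_mul, exp_sub, exp_mul_I (π / 2), cos_pi_div_two, sin_pi_div_two]
    simp only [zero_add, one_mul, div_I]
    ring
  rw [h, sin, mul_assoc, mul_sub, ← exp_add]
  ring_nf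

lemma sum_range_add_mul_pi_div (n : ℕ) (hn : 0 < n) (z : ℂ) :
    ∑ k ∈ range n, (z + k * π / n - π / 2) = n * z - π / 2 := by
  have hgauss (m : ℕ) : (∑ k ∈ range m, (k : ℂ)) * 2 = m * (m - 1) := by
    induction m with
    | zero => simp
    | succ m ih => rw [sum_range_succ, add_mul, ih]; push_cast; ring
  have hn' : (n : ℂ) ≠ 0 := by exact_mod_cast hn.ne'
  rw [sum_sub_distrib, sum_add_distrib, ← sum_div, ← sum_mul]
  simp only [sum_const, card_range, nsmul_eq_mul]
  field_simp
  linear_combination π * hgauss n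

lemma prod_two_mul_sin_add (n : ℕ) (hn : 0 < n) (z : ℂ) :
    ∏ k ∈ range n, 2 * sin (z + k * π / n) = 2 * sin (n * z) := by
  have hζ : IsPrimitiveRoot (exp (-(2 * π * I / n))) n := by
    rw [exp_neg]; exact (isPrimitiveRoot_exp n hn.ne').inv
  have hfactor (k : ℕ) : 2 * sin (z + k * π / n) =
      exp ((z + k * π / n - π / 2) * I) * (1 - exp (-(2 * π * I / n)) ^ k * exp (-2 * z * I)) := by
    rw [two_mul_sin_eq_exp_mul, ← exp_nat_mul, ← exp_add]
    congr 3
    field_simp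
    ring
  rw [prod_congr rfl fun k _ => hfactor k, prod_mul_distrib, ← exp_sum, ← sum_mul,
    sum_range_add_mul_pi_div n hn, hζ.prod_one_sub_pow_mul hn, ← exp_nat_mul,
    two_mul_sin_eq_exp_mul]
  ring_nf

end Complex

lemma Real.prod_two_mul_sin_add (n : ℕ) (hn : 0 < n) (x : ℝ) :
    ∏ k ∈ range n, 2 * sin (x + k * π / n) = 2 * sin (n * x) := by
  exact_mod_cast Complex.prod_two_mul_sin_add n hn x

lemma ae_sin_mul_ne_zero {c : ℝ} (hc : c ≠ 0) : ∀ᵐ t : ℝ, sin (c * t) ≠ 0 := by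
  refine measure_mono_null (fun t ht => ?_)
    ((Set.countable_range fun k : ℤ => k * π / c).measure_zero _)
  obtain ⟨k, hk⟩ := Real.sin_eq_zero_iff.1 (not_not.1 ht)
  exact ⟨k, by field_simp; linarith⟩

lemma intervalIntegrable_log_abs_two_mul_sin (a b : ℝ) :
    IntervalIntegrable (fun t => log |2 * sin t|) volume a b :=
  (analyticOnNhd_const.mul analyticOnNhd_sin).meromorphicOn.intervalIntegrable_log_norm

lemma log_abs_two_mul_sin_periodic : Function.Periodic (fun t => log |2 * sin t|) π := by
  intro t
  simp [sin_add_pi]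

lemma ae_log_abs_two_mul_sin_mul (n : ℕ) (hn : 0 < n) :
    ∀ᵐ t : ℝ, log |2 * sin (n * t)| = ∑ k ∈ range n, log |2 * sin (t + k * π / n)| := by
  filter_upwards [ae_sin_mul_ne_zero (Nat.cast_ne_zero.2 hn.ne')] with t ht
  have hprod := Real.prod_two_mul_sin_add n hn t
  rw [← hprod, abs_prod, log_prod]
  intro k hk
  have := prod_ne_zero_iff.1 (hprod ▸ mul_ne_zero two_ne_zero ht) k hk
  exact abs_ne_zero.2 this

lemma integral_log_abs_two_mul_sin_zero_pi : ∫ t in 0..π, log |2 * sin t| = 0 := by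
  have h : ∀ᵐ t : ℝ, log |2 * sin t| = log 2 + log (sin t) := by
    filter_upwards [ae_sin_mul_ne_zero one_ne_zero] with t ht
    rw [one_mul] at ht
    rw [log_abs, log_mul two_ne_zero ht]
  rw [intervalIntegral.integral_congr_ae (h.mono fun t ht _ => ht),
    intervalIntegral.integral_add intervalIntegrable_const (g := fun t => log (sin t))
      intervalIntegrable_log_sin,
    integral_log_sin_zero_pi, intervalIntegral.integral_const, smul_eq_mul, sub_zero]
  ring

lemma lob_zero : lob 0 = 0 := by simp [lob]

lemma lob_neg (θ : ℝ) : lob (-θ) = -lob θ := by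
  have h := intervalIntegral.integral_comp_neg (a := 0) (b := θ) fun t => log |2 * sin t|
  simp only [sin_neg, mul_neg, abs_neg, neg_zero] at h
  rw [lob, lob, h, intervalIntegral.integral_symm 0 (-θ), neg_neg]

lemma lob_add_pi (θ : ℝ) : lob (θ + π) = lob θ := by
  rw [lob, lob, ← intervalIntegral.integral_add_adjacent_intervals
      (intervalIntegrable_log_abs_two_mul_sin 0 θ) (intervalIntegrable_log_abs_two_mul_sin θ _),
    log_abs_two_mul_sin_periodic.intervalIntegral_add_eq θ 0, zero_add,
    integral_log_abs_two_mul_sin_zero_pi, add_zero]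

lemma lob_pi_sub (θ : ℝ) : lob (π - θ) = -lob θ := by
  rw [sub_eq_neg_add, lob_add_pi, lob_neg]

lemma lob_pi : lob π = 0 := by
  rw [← zero_add π, lob_add_pi, lob_zero]

lemma sum_lob_mul_pi_div (n : ℕ) : ∑ k ∈ range n, lob (k * π / n) = 0 := by
  rcases Nat.eq_zero_or_pos n with rfl | hn
  · simp
  have hn' : (n : ℝ) ≠ 0 := by positivity
  set f : ℕ → ℝ := fun k => lob (k * π / n)
  have hshift : ∑ k ∈ range n, f (k + 1) = ∑ k ∈ range n, f k := by
    have h := sum_range_succ f n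
    rw [sum_range_succ'] at h
    simp only [f, Nat.cast_zero, zero_mul, zero_div, lob_zero, mul_div_cancel_left₀ π hn',
      lob_pi] at h
    linarith
  have hreflect : ∑ k ∈ range n, f (n - 1 - k) = -∑ k ∈ range n, f (k + 1) := by
    rw [← sum_neg_distrib]
    refine sum_congr rfl fun k hk => ?_
    have hk : k < n := mem_range.1 hk
    simp only [f]
    rw [Nat.cast_sub (by omega), Nat.cast_sub (by omega), ← lob_pi_sub]
    congr 1
    push_cast
    field_simp
    ring
  rw [sum_range_reflect, hshift] at hreflect
  linarith

lemma integral_log_abs_two_mul_sin_add (θ c : ℝ) :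
    ∫ x in 0..θ, log |2 * sin (x + c)| = lob c - lob (θ + c) := by
  rw [intervalIntegral.integral_comp_add_right (fun t => log |2 * sin t|), zero_add,
    ← intervalIntegral.integral_interval_sub_left (intervalIntegrable_log_abs_two_mul_sin 0 _)
      (intervalIntegrable_log_abs_two_mul_sin 0 c), lob, lob]
  ring

lemma lob_nat_mul_eq_sum_sub (n : ℕ) (hn : 0 < n) (θ : ℝ) :
    lob (n * θ) = n * ∑ j ∈ range n, (lob (θ + j * π / n) - lob (j * π / n)) := by
  have hn' : (n : ℝ) ≠ 0 := by positivity
  have hscale : n * ∫ x in 0..θ, log |2 * sin (n * x)| = -lob (n * θ) := by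
    rw [intervalIntegral.integral_comp_mul_left (fun t => log |2 * sin t|) hn', mul_zero,
      smul_eq_mul, mul_inv_cancel_left₀ hn', lob, neg_neg]
  have hsplit : ∫ x in 0..θ, log |2 * sin (n * x)| =
      ∑ j ∈ range n, (lob (j * π / n) - lob (θ + j * π / n)) := by
    rw [intervalIntegral.integral_congr_ae
        ((ae_log_abs_two_mul_sin_mul n hn).mono fun t ht _ => ht),
      intervalIntegral.integral_finsetSum fun j _ => ?_]
    · exact sum_congr rfl fun j _ => integral_log_abs_two_mul_sin_add θ _
    · simpa using
        (intervalIntegrable_log_abs_two_mul_sin (j * π / n) (θ + j * π / n)).comp_add_right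
          (j * π / n)
  rw [hsplit, sum_sub_distrib] at hscale
  rw [sum_sub_distrib]
  linear_combination hscale

/-- the distribution identity Л(nθ) = n Σ_{j=0}^{n-1} Л(θ + jπ/n)
for every positive integer n and all real θ. -/
theorem stmt13 (n : ℕ) (hn : 0 < n) (θ : ℝ) :
    lob (n * θ) = n * ∑ j ∈ Finset.range n, lob (θ + j * π / n) := by
  rw [lob_nat_mul_eq_sum_sub n hn, sum_sub_distrib, sum_lob_mul_pi_div, sub_zero]
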